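/- arXiv:1307.3810 — 2 statements merged into one kernel-verified Lean document; each statement's English description precedes it below -/
import Mathlib

section
/- For any two n×m real matrices F and G, det(I_m + F^T G) = Σ_P det(F_P) det(G_P), where the sum ranges over all square submatrix patterns P (including the empty pattern, which contributes 1). -/
/-!
Multilinearity of the determinant in the rows turns `det (1 + M)` into the sum of the principal
minors of `M = Fᵀ * G`, and the principal minor on the columns `J` is `det (F_{·J}ᵀ * G_{·J})`,
which the Cauchy–Binet formula expands as `∑ I, det F_{IJ} * det G_{IJ}`.

Cauchy–Binet itself: expanding `det (A * B)` over all maps `f : Fin k → ι` picking one summand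
per row, the non-injective `f` repeat a row of `B` and contribute nothing, while the `f` with
image `I` are exactly `e ∘ σ` for the increasing enumeration `e` of `I` and `σ` a permutation;
their contributions add up to `det A_{·I} * det B_{I·}`.
-/

open Matrix Finset Function Equiv

theorem Function.Injective.exists_perm_comp_eq {κ ι : Type*} [Finite κ] {e f : κ → ι}
    (hf : Injective f) (hfe : ∀ b, ∃ c, e c = f b) : ∃ σ : Perm κ, e ∘ σ = f := by
  choose g hg using hfe
  have hg_inj : Injective g := fun b₁ b₂ h => hf (by rw [← hg, h, hg])
  exact ⟨ofBijective g hg_inj.bijective_of_finite, funext hg⟩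

namespace Matrix

variable {R ι κ : Type*} [CommRing R]

theorem det_one_add_eq_sum_det_submatrix [Fintype ι] [DecidableEq ι] (M : Matrix ι ι R) :
    det (1 + M) = ∑ s : Finset ι, (M.submatrix ((↑) : s → ι) (↑)).det := by
  rw [add_comm]
  refine ((detRowAlternating : (ι → R) [⋀^ι]→ₗ[R] R).map_add_univ
    M.row (1 : Matrix ι ι R).row).trans ?_
  exact sum_congr rfl fun s _ => det_piecewise_one_eq_submatrix_det M s

theorem det_submatrix_coe_eq_det_submatrix_orderEmbOfFin [LinearOrder ι]
    (M : Matrix ι ι R) (s : Finset ι) :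
    (M.submatrix ((↑) : s → ι) (↑)).det =
      (M.submatrix (s.orderEmbOfFin rfl) (s.orderEmbOfFin rfl)).det := by
  rw [← det_submatrix_equiv_self (s.orderIsoOfFin rfl).toEquiv, submatrix_submatrix]
  rfl

section CauchyBinet

variable [Fintype κ] [DecidableEq κ]

theorem det_mul_eq_sum_prod_mul_det_submatrix [Fintype ι] (A : Matrix κ ι R)
    (B : Matrix ι κ R) :
    det (A * B) = ∑ f : κ → ι, (∏ a, A a (f a)) * det (B.submatrix f id) := by
  have hrows : (A * B).row = fun a => ∑ i, A a i • B.row i := by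
    ext a b
    simp [mul_apply]
  change detRowAlternating (A * B).row = _
  rw [hrows]
  refine ((detRowAlternating : (κ → R) [⋀^κ]→ₗ[R] R).map_sum
    (fun a i => A a i • B.row i)).trans (sum_congr rfl fun f _ => ?_)
  exact (detRowAlternating : (κ → R) [⋀^κ]→ₗ[R] R).map_smul_univ _ _

theorem det_submatrix_eq_zero_of_not_injective (B : Matrix ι κ R) {f : κ → ι}
    (hf : ¬Injective f) : det (B.submatrix f id) = 0 := by
  obtain ⟨a, b, hab, hne⟩ := not_injective_iff.mp hf
  exact det_zero_of_row_eq hne (by ext; simp [hab])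

theorem sum_perm_prod_mul_det_submatrix_comp (A : Matrix κ ι R) (B : Matrix ι κ R)
    (e : κ → ι) :
    ∑ σ : Perm κ, (∏ a, A a (e (σ a))) * det (B.submatrix (e ∘ σ) id) =
      det (A.submatrix id e) * det (B.submatrix e id) := by
  have hB (σ : Perm κ) :
      det (B.submatrix (e ∘ σ) id) = Perm.sign σ * det (B.submatrix e id) :=
    det_permute σ (B.submatrix e id)
  simp_rw [hB, ← det_transpose (A.submatrix id e), det_apply', sum_mul]
  exact sum_congr rfl fun σ _ => by simp only [transpose_apply, submatrix_apply, id]; ring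

variable [Fintype ι] [LinearOrder ι] {k : ℕ}

theorem sum_prod_mul_det_submatrix_of_image_eq (A : Matrix (Fin k) ι R)
    (B : Matrix ι (Fin k) R) (I : Finset ι) :
    ∑ f : Fin k → ι with univ.image f = I, (∏ a, A a (f a)) * det (B.submatrix f id) =
      if h : I.card = k then
        det (A.submatrix id (I.orderEmbOfFin h)) * det (B.submatrix (I.orderEmbOfFin h) id)
      else 0 := by
  split_ifs with h
  · set e := I.orderEmbOfFin h
    rw [← sum_perm_prod_mul_det_submatrix_comp]
    symm
    refine sum_bij (fun σ _ => e ∘ σ) (fun σ _ => ?_) (fun σ _ τ _ hστ => ?_) (fun f hf => ?_)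
      (fun _ _ => rfl)
    · simp [← image_image, image_orderEmbOfFin_univ, e]
    · exact Equiv.ext fun a => e.injective (congrFun hστ a)
    · rw [mem_filter_univ] at hf
      have hf_inj : Injective f := by
        rw [← Set.injOn_univ, ← coe_univ, ← card_image_iff, hf, h, card_univ, Fintype.card_fin]
      obtain ⟨σ, hσ⟩ := hf_inj.exists_perm_comp_eq fun b => by
        rw [← Set.mem_range, range_orderEmbOfFin I h, ← hf, coe_image]
        exact Set.mem_image_of_mem f (mem_univ b)
      exact ⟨σ, mem_univ σ, hσ⟩
  · refine sum_eq_zero fun f hf => ?_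
    rw [mem_filter_univ] at hf
    have hf_inj : ¬Injective f := fun hinj => h (by simp [← hf, card_image_of_injective _ hinj])
    rw [det_submatrix_eq_zero_of_not_injective B hf_inj, mul_zero]

theorem det_mul_eq_sum_det_submatrix_mul_det_submatrix (A : Matrix (Fin k) ι R)
    (B : Matrix ι (Fin k) R) :
    det (A * B) = ∑ I : Finset ι,
      if h : I.card = k then
        det (A.submatrix id (I.orderEmbOfFin h)) * det (B.submatrix (I.orderEmbOfFin h) id)
      else 0 := by
  rw [det_mul_eq_sum_prod_mul_det_submatrix, ← sum_fiberwise univ (fun f => univ.image f)]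
  exact sum_congr rfl fun I _ => sum_prod_mul_det_submatrix_of_image_eq A B I

end CauchyBinet

end Matrix

theorem det_one_add_transpose_mul {n m : ℕ} (F G : Matrix (Fin n) (Fin m) ℝ) :
    (1 + Fᵀ * G).det =
      ∑ I : Finset (Fin n), ∑ J : Finset (Fin m),
        (if h : I.card = J.card then
          (F.submatrix (I.orderEmbOfFin h) (J.orderEmbOfFin rfl)).det *
          (G.submatrix (I.orderEmbOfFin h) (J.orderEmbOfFin rfl)).det
        else 0) := by
  rw [det_one_add_eq_sum_det_submatrix, sum_comm]
  refine sum_congr rfl fun J _ => ?_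
  rw [det_submatrix_coe_eq_det_submatrix_orderEmbOfFin, submatrix_mul _ _ _ id _ bijective_id,
    ← transpose_submatrix, det_mul_eq_sum_det_submatrix_mul_det_submatrix]
  refine sum_congr rfl fun I _ => ?_
  split_ifs
  · rw [← transpose_submatrix, det_transpose, submatrix_submatrix, submatrix_submatrix]
    rfl
  · rfl
end

section
/- For a finite simple graph G with Laplacian L, det(I - L) equals the number of rooted spanning forests of G with an even number of edges minus the number of rooted spanning forests with an odd number of edges. -/
/-
Row `v` of `1 - L` is `e_v + ∑_{w ~ v} (e_w - e_v)`, so by multilinearity `det (1 - L)` is the sum,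
over all maps `g` sending each vertex to itself or to a neighbour, of the determinant of the matrix
with rows `e_v` (if `g v = v`) and `e_{g v} - e_v` (otherwise). If `g` has a cycle of length at
least two, the rows along it sum to zero and the determinant vanishes. Otherwise every vertex
reaches a fixed point of `g`; the matrix is triangular with respect to the number of steps needed,
and its determinant is `(-1)^m`, `m` the number of vertices moved by `g`. These maps are exactly the
parent maps of rooted spanning forests (roots = fixed points, one edge `{v, g v}` per moved `v`),
so the sum is the signed count of rooted spanning forests by their number of edges.
-/

open Matrix SimpleGraph

/-- A rooted spanning forest of `G`. -/
structure RootedForest {V : Type*} (G : SimpleGraph V) where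
  H : SimpleGraph V
  le : H ≤ G
  acyclic : H.IsAcyclic
  root : V → V
  reach_root : ∀ v, H.Reachable v (root v)
  root_const : ∀ u v, H.Reachable u v → root u = root v

open Finset Function

namespace Function

variable {V : Type*} {g : V → V}

def ReachesFixedPt (g : V → V) : Prop := ∀ v, ∃ k, IsFixedPt g (g^[k] v)

theorem reachesFixedPt_of_lt (φ : V → ℕ) (hφ : ∀ v, g v ≠ v → φ (g v) < φ v) :
    ReachesFixedPt g := by
  intro v
  induction h : φ v using Nat.strong_induction_on generalizing v with
  | _ n ih =>
    by_cases hv : g v = v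
    · exact ⟨0, hv⟩
    · obtain ⟨k, hk⟩ := ih _ (h ▸ hφ v hv) (g v) rfl
      exact ⟨k + 1, by rwa [iterate_succ_apply]⟩

theorem exists_isPeriodicPt_of_not_reachesFixedPt [Finite V] (hg : ¬ReachesFixedPt g) :
    ∃ w p, 0 < p ∧ IsPeriodicPt g p w ∧ ∀ m, g (g^[m] w) ≠ g^[m] w := by
  obtain ⟨v, hv⟩ := not_forall.1 hg
  obtain ⟨i, j, hij, hv_eq⟩ := Finite.exists_ne_map_eq_of_infinite fun k => g^[k] v
  wlog hlt : i < j generalizing i j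
  · exact this j i hij.symm hv_eq.symm (by omega)
  refine ⟨g^[i] v, j - i, by omega, ?_, fun m hm => hv ⟨m + i, ?_⟩⟩
  · rw [IsPeriodicPt, IsFixedPt, ← iterate_add_apply, Nat.sub_add_cancel hlt.le, hv_eq]
  · rwa [iterate_add_apply]

namespace ReachesFixedPt

open scoped Classical

variable (hg : ReachesFixedPt g)
include hg

noncomputable def depth (v : V) : ℕ := Nat.find (hg v)

noncomputable def sink (v : V) : V := g^[hg.depth v] v

theorem isFixedPt_sink (v : V) : IsFixedPt g (hg.sink v) := Nat.find_spec (hg v)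

theorem depth_eq_zero_iff {v : V} : hg.depth v = 0 ↔ g v = v := by
  simp [depth, Nat.find_eq_zero, IsFixedPt]

theorem sink_eq_self {v : V} (hv : g v = v) : hg.sink v = v := by
  rw [sink, (hg.depth_eq_zero_iff).2 hv, iterate_zero_apply]

theorem depth_apply_add_one {v : V} (hv : g v ≠ v) : hg.depth (g v) + 1 = hg.depth v := by
  have hpos : hg.depth v ≠ 0 := (hg.depth_eq_zero_iff).not.2 hv
  have hle : hg.depth v ≤ hg.depth (g v) + 1 :=
    Nat.find_min' _ (by rw [iterate_succ_apply]; exact hg.isFixedPt_sink (g v))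
  have hge : hg.depth (g v) ≤ hg.depth v - 1 :=
    Nat.find_min' _ (by rw [← iterate_succ_apply, Nat.succ_eq_add_one, Nat.sub_add_cancel
      (Nat.pos_of_ne_zero hpos)]; exact hg.isFixedPt_sink v)
  omega

theorem depth_apply_lt {v : V} (hv : g v ≠ v) : hg.depth (g v) < hg.depth v := by
  have := hg.depth_apply_add_one hv
  omega

theorem sink_apply (v : V) : hg.sink (g v) = hg.sink v := by
  by_cases hv : g v = v
  · rw [hv]
  · rw [sink, sink, ← hg.depth_apply_add_one hv, iterate_succ_apply]

end ReachesFixedPt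

end Function

namespace SimpleGraph

variable {V : Type*} {g : V → V}

def fromFun (g : V → V) : SimpleGraph V := fromRel fun v w => g v = w

@[simp]
theorem fromFun_adj {v w : V} : (fromFun g).Adj v w ↔ v ≠ w ∧ (g v = w ∨ g w = v) := fromRel_adj ..

theorem fromFun_adj_apply {v : V} (hv : g v ≠ v) : (fromFun g).Adj v (g v) := by
  simp [Ne.symm hv]

def IsParentMap (G : SimpleGraph V) (g : V → V) : Prop := ∀ v, g v ≠ v → G.Adj v (g v)

theorem IsParentMap.mono {G G' : SimpleGraph V} (hg : G.IsParentMap g) (h : G ≤ G') :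
    G'.IsParentMap g := fun v hv => h (hg v hv)

theorem IsParentMap.fromFun_le {G : SimpleGraph V} (hg : G.IsParentMap g) : fromFun g ≤ G := by
  rintro v w ⟨hvw, rfl | rfl⟩
  · exact hg v (Ne.symm hvw)
  · exact (hg w hvw).symm

theorem fromFun_reachable_iterate (v : V) (k : ℕ) : (fromFun g).Reachable v (g^[k] v) := by
  induction k with
  | zero => rfl
  | succ k ih =>
    rw [iterate_succ_apply']
    by_cases h : g (g^[k] v) = g^[k] v
    · rwa [h]
    · exact ih.trans (fromFun_adj_apply h).reachable

theorem apply_eq_of_fromFun_reachable {α : Type*} {ψ : V → α} (hψ : ∀ v, ψ (g v) = ψ v) {u v : V}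
    (h : (fromFun g).Reachable u v) : ψ u = ψ v := by
  obtain ⟨p⟩ := h
  induction p with
  | nil => rfl
  | cons hadj _ ih =>
    obtain ⟨-, rfl | rfl⟩ := fromFun_adj.1 hadj
    · rw [← ih, hψ]
    · rw [hψ, ih]

theorem IsAcyclic.eq_of_le {H K : SimpleGraph V} (hH : H.IsAcyclic) (hle : K ≤ H)
    (hreach : ∀ ⦃a b⦄, H.Adj a b → K.Reachable a b) : K = H := by
  refine le_antisymm hle fun a b hab => ?_
  obtain ⟨p⟩ := hreach hab
  have hmem := isBridge_iff_forall_walk_mem_edges.1 (isAcyclic_iff_forall_adj_isBridge.1 hH hab)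
    (p.mapLe hle)
  rw [Walk.edges_mapLe_eq_edges] at hmem
  exact p.adj_of_mem_edges hmem

end SimpleGraph

namespace Function.ReachesFixedPt

open SimpleGraph

variable {V : Type*} {g g' : V → V} (hg : ReachesFixedPt g)
include hg

theorem reachable_sink (v : V) : (fromFun g).Reachable v (hg.sink v) :=
  fromFun_reachable_iterate v _

theorem sink_eq_of_reachable {u v : V} (h : (fromFun g).Reachable u v) : hg.sink u = hg.sink v :=
  apply_eq_of_fromFun_reachable hg.sink_apply h

theorem isAcyclic_fromFun [DecidableEq V] : (fromFun g).IsAcyclic := by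
  intro u c hc
  obtain ⟨x, hx, hmax⟩ := c.support.toFinset.exists_max_image hg.depth ⟨u, by simp⟩
  rw [List.mem_toFinset] at hx
  set c' := c.rotate x hx
  have hc' : c'.IsCycle := hc.rotate hx
  -- the two cycle-neighbours of a vertex of maximal depth must both be its image under `g`
  have hnbr : ∀ y ∈ c'.support, (fromFun g).Adj x y → g x = y := by
    intro y hy hxy
    obtain ⟨hne, h | h⟩ := fromFun_adj.1 hxy
    · exact h
    · have := hg.depth_apply_lt (h.trans_ne hne)
      rw [h] at this
      exact absurd (hmax y (by simpa [c', Walk.mem_support_rotate_iff] using hy)) this.not_ge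
  exact hc'.snd_ne_penultimate <|
    (hnbr _ (c'.getVert_mem_support 1) (c'.adj_snd hc'.not_nil)).symm.trans
      (hnbr _ (c'.getVert_mem_support _) (c'.adj_penultimate hc'.not_nil).symm)

theorem card_edgeSet_fromFun [Fintype V] [DecidableEq V] :
    Nat.card (fromFun g).edgeSet = #{v | g v ≠ v} := by
  let e : {v // g v ≠ v} → (fromFun g).edgeSet := fun v =>
    ⟨s(v, g v), fromFun_adj_apply v.2⟩
  have he : Bijective e := by
    refine ⟨fun v w hvw => ?_, fun ⟨x, hx⟩ => ?_⟩
    · rcases Sym2.eq_iff.1 (congrArg Subtype.val hvw) with ⟨h, -⟩ | ⟨h₁, h₂⟩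
      · exact Subtype.ext h
      · have hv := hg.depth_apply_lt v.2
        have hw := hg.depth_apply_lt w.2
        rw [h₂] at hv
        rw [← h₁] at hw
        omega
    · induction x using Sym2.ind with
      | _ a b =>
        obtain ⟨hab, h | h⟩ := fromFun_adj.1 hx
        · exact ⟨⟨a, h.trans_ne (Ne.symm hab)⟩, Subtype.ext (by simp [e, h])⟩
        · exact ⟨⟨b, h.trans_ne hab⟩, Subtype.ext (by simp [e, h, Sym2.eq_swap])⟩
  rw [← Nat.card_congr (Equiv.ofBijective e he), Nat.card_eq_fintype_card, Fintype.card_subtype]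

theorem eq_of_fromFun_eq (hgraph : fromFun g = fromFun g') (hfix : ∀ v, g v = v → g' v = v) :
    g = g' := by
  funext v
  induction h : hg.depth v using Nat.strong_induction_on generalizing v with
  | _ n ih =>
    by_cases hv : g v = v
    · rw [hv, hfix v hv]
    have hadj : (fromFun g').Adj v (g v) := hgraph ▸ fromFun_adj_apply hv
    obtain ⟨-, h' | h'⟩ := fromFun_adj.1 hadj
    · exact h'.symm
    · -- otherwise `g (g v) = v`, and the depth would drop twice along a 2-cycle
      have hgg : g (g v) = v := (ih _ (h ▸ hg.depth_apply_lt hv) (g v) rfl).trans h'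
      have h1 := hg.depth_apply_lt hv
      have h2 := hg.depth_apply_lt (hgg.trans_ne (Ne.symm hv))
      rw [hgg] at h2
      omega

end Function.ReachesFixedPt

theorem SimpleGraph.Walk.adj_snd_and_dist_lt_of_length_eq_dist {V : Type*} {G : SimpleGraph V}
    {u v : V} (p : G.Walk u v) (hp : p.length = G.dist u v) (huv : u ≠ v) :
    G.Adj u p.snd ∧ G.dist p.snd v < G.dist u v := by
  have hnil : ¬p.Nil := Walk.not_nil_of_ne huv
  refine ⟨p.adj_snd hnil, ?_⟩
  have := p.length_tail_add_one hnil
  have := dist_le p.tail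
  omega

namespace RootedForest

variable {V : Type*} {G : SimpleGraph V}

theorem ext {f₁ f₂ : RootedForest G} (hH : f₁.H = f₂.H) (hroot : f₁.root = f₂.root) :
    f₁ = f₂ := by
  cases f₁; cases f₂; subst hH hroot; rfl

noncomputable def ofParentMap [DecidableEq V] (g : V → V) (hG : G.IsParentMap g)
    (hg : ReachesFixedPt g) : RootedForest G where
  H := fromFun g
  le := hG.fromFun_le
  acyclic := hg.isAcyclic_fromFun
  root := hg.sink
  reach_root := hg.reachable_sink
  root_const _ _ := hg.sink_eq_of_reachable

variable (f : RootedForest G)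

noncomputable def parent (v : V) : V := (f.reach_root v).exists_walk_length_eq_dist.choose.snd

theorem adj_parent_and_dist_lt {v : V} (hv : f.root v ≠ v) :
    f.H.Adj v (f.parent v) ∧ f.H.dist (f.parent v) (f.root v) < f.H.dist v (f.root v) :=
  Walk.adj_snd_and_dist_lt_of_length_eq_dist _
    (f.reach_root v).exists_walk_length_eq_dist.choose_spec hv.symm

theorem parent_eq_self_iff {v : V} : f.parent v = v ↔ f.root v = v := by
  refine ⟨fun h => by_contra fun hv => (f.adj_parent_and_dist_lt hv).1.ne h.symm, fun hv => ?_⟩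
  have hlen : (f.reach_root v).exists_walk_length_eq_dist.choose.length = 0 := by
    rw [(f.reach_root v).exists_walk_length_eq_dist.choose_spec, hv, dist_self]
  rw [parent, Walk.snd, Walk.getVert_of_length_le _ (by omega), hv]

theorem isParentMap_parent : f.H.IsParentMap f.parent :=
  fun _ hv => (f.adj_parent_and_dist_lt (mt f.parent_eq_self_iff.2 hv)).1

theorem root_parent (v : V) : f.root (f.parent v) = f.root v := by
  by_cases hv : f.root v = v
  · rw [f.parent_eq_self_iff.2 hv]
  · exact (f.root_const _ _ (f.adj_parent_and_dist_lt hv).1.reachable).symm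

theorem reachesFixedPt_parent : ReachesFixedPt f.parent :=
  reachesFixedPt_of_lt (fun v => f.H.dist v (f.root v)) fun v hv => by
    simpa only [root_parent] using (f.adj_parent_and_dist_lt (mt f.parent_eq_self_iff.2 hv)).2

theorem sink_parent : f.reachesFixedPt_parent.sink = f.root := by
  funext v
  have hroot :=
    apply_eq_of_fromFun_reachable f.root_parent (f.reachesFixedPt_parent.reachable_sink v)
  rw [hroot, f.parent_eq_self_iff.1 (f.reachesFixedPt_parent.isFixedPt_sink v)]

theorem fromFun_parent_reachable_root (v : V) : (fromFun f.parent).Reachable v (f.root v) :=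
  f.sink_parent ▸ f.reachesFixedPt_parent.reachable_sink v

theorem fromFun_parent : fromFun f.parent = f.H :=
  f.acyclic.eq_of_le f.isParentMap_parent.fromFun_le fun a b hab =>
    (f.fromFun_parent_reachable_root a).trans <|
      f.root_const a b hab.reachable ▸ (f.fromFun_parent_reachable_root b).symm

theorem parent_ofParentMap [DecidableEq V] {g : V → V} (hG : G.IsParentMap g)
    (hg : ReachesFixedPt g) : (ofParentMap g hG hg).parent = g :=
  (hg.eq_of_fromFun_eq (fromFun_parent (ofParentMap g hG hg)).symm fun _ hv =>
    (parent_eq_self_iff _).2 (hg.sink_eq_self hv)).symm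

noncomputable def equivParentMap [DecidableEq V] :
    RootedForest G ≃ {g : V → V // G.IsParentMap g ∧ ReachesFixedPt g} where
  toFun f := ⟨f.parent, f.isParentMap_parent.mono f.le, f.reachesFixedPt_parent⟩
  invFun g := ofParentMap g.1 g.2.1 g.2.2
  left_inv f := ext f.fromFun_parent f.sink_parent
  right_inv g := Subtype.ext (parent_ofParentMap g.2.1 g.2.2)

theorem natCard_edgeSet_eq_card_parent_ne [Fintype V] [DecidableEq V] :
    Nat.card f.H.edgeSet = #{v | f.parent v ≠ v} := by
  rw [← f.reachesFixedPt_parent.card_edgeSet_fromFun, fromFun_parent]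

end RootedForest

theorem Matrix.det_eq_prod_diag_of_lt {n R : Type*} [Fintype n] [DecidableEq n] [CommRing R]
    (M : Matrix n n R) (φ : n → ℕ) (hM : ∀ i j, i ≠ j → M i j ≠ 0 → φ j < φ i) :
    M.det = ∏ i, M i i := by
  rw [det_apply', Finset.sum_eq_single 1 (fun σ _ hσ => ?_) (by simp)]
  · simp
  -- a moved point of maximal `φ` contributes a vanishing factor
  obtain ⟨i, hi, hmax⟩ := σ.support.exists_max_image φ
    (Finset.nonempty_iff_ne_empty.2 (mt Equiv.Perm.support_eq_empty_iff.1 hσ))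
  have hzero : M (σ i) i = 0 := by_contra fun hne =>
    (hmax _ (Equiv.Perm.apply_mem_support.2 hi)).not_gt
      (hM _ _ (Equiv.Perm.mem_support.1 hi) hne)
  exact mul_eq_zero_of_right _ (prod_eq_zero (mem_univ i) hzero)

section StepMatrix

variable {V R : Type*} [DecidableEq V]

def stepRow [Ring R] (v w : V) : V → R :=
  if w = v then Pi.single v 1 else Pi.single w 1 - Pi.single v 1

theorem stepRow_self [Ring R] (v : V) : (stepRow v v : V → R) = Pi.single v 1 := if_pos rfl

theorem stepRow_of_ne [Ring R] {v w : V} (h : w ≠ v) :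
    (stepRow v w : V → R) = Pi.single w 1 - Pi.single v 1 := if_neg h

def stepMatrix [Ring R] (g : V → V) : Matrix V V R := of fun v => stepRow v (g v)

theorem stepMatrix_row [Ring R] {g : V → V} {v : V} (hv : g v ≠ v) :
    (stepMatrix g : Matrix V V R) v = Pi.single (g v) 1 - Pi.single v 1 :=
  stepRow_of_ne hv

theorem stepMatrix_apply [Ring R] (g : V → V) (v u : V) :
    (stepMatrix g : Matrix V V R) v u =
      if g v = v then (Pi.single v 1 : V → R) u
      else (Pi.single (g v) 1 : V → R) u - (Pi.single v 1 : V → R) u := by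
  by_cases hv : g v = v <;> simp [stepMatrix, stepRow, hv]

theorem det_stepMatrix_of_reachesFixedPt [Fintype V] [CommRing R] {g : V → V}
    (hg : ReachesFixedPt g) :
    (stepMatrix g : Matrix V V R).det = (-1) ^ #{v | g v ≠ v} := by
  rw [det_eq_prod_diag_of_lt _ hg.depth fun v u hvu huv => ?_]
  · calc ∏ v, (stepMatrix g : Matrix V V R) v v = ∏ v, if g v = v then 1 else -1 :=
          prod_congr rfl fun v _ => by by_cases hv : g v = v <;> simp [stepMatrix_apply, hv]
      _ = (-1) ^ #{v | g v ≠ v} := by rw [prod_ite, prod_const_one, one_mul, prod_const]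
  · by_cases hv : g v = v
    · simp [stepMatrix_apply, hv, Ne.symm hvu] at huv
    · obtain rfl : u = g v := by
        by_contra hu
        simp [stepMatrix_apply, hv, Ne.symm hvu, hu] at huv
      exact hg.depth_apply_lt hv

theorem det_stepMatrix_of_not_reachesFixedPt [Fintype V] {g : V → V} (hg : ¬ReachesFixedPt g) :
    (stepMatrix g : Matrix V V ℤ).det = 0 := by
  obtain ⟨w, p, hp, hper, hmoved⟩ := exists_isPeriodicPt_of_not_reachesFixedPt hg
  -- the rows along the cycle through `w` telescope to zero
  set c : V → ℤ := ∑ m ∈ range p, Pi.single (g^[m] w) 1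
  have hc : c ᵥ* stepMatrix g = 0 := by
    simp only [c, sum_vecMul, single_one_vecMul, row]
    rw [sum_congr rfl fun m _ => stepMatrix_row (hmoved m)]
    simp_rw [← iterate_succ_apply' g]
    rw [sum_range_sub (fun m => (Pi.single (g^[m] w) 1 : V → ℤ)), hper.eq, iterate_zero_apply,
      sub_self]
  have hcw : 0 < c w := by
    simp only [c, Finset.sum_apply]
    calc (0 : ℤ) < (Pi.single (g^[0] w) 1 : V → ℤ) w := by simp
      _ ≤ ∑ m ∈ range p, (Pi.single (g^[m] w) 1 : V → ℤ) w :=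
        single_le_sum (f := fun m => (Pi.single (g^[m] w) 1 : V → ℤ) w)
          (fun _ _ => by rw [Pi.single_apply]; split_ifs <;> simp) (mem_range.2 hp)
  exact exists_vecMul_eq_zero_iff.1 ⟨c, fun h => hcw.ne' (by rw [h]; rfl), hc⟩

end StepMatrix

namespace SimpleGraph

variable {V : Type*} [Fintype V] [DecidableEq V] (G : SimpleGraph V) [DecidableRel G.Adj]

def parentMaps : Finset (V → V) := Fintype.piFinset fun v => insert v (G.neighborFinset v)

theorem mem_parentMaps {g : V → V} : g ∈ G.parentMaps ↔ G.IsParentMap g := by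
  simp only [parentMaps, Fintype.mem_piFinset, mem_insert, mem_neighborFinset, IsParentMap,
    or_iff_not_imp_left]

theorem one_sub_lapMatrix_row {R : Type*} [Ring R] (v : V) :
    (1 - G.lapMatrix R) v = ∑ w ∈ insert v (G.neighborFinset v), stepRow v w := by
  ext u
  rw [sum_insert (G.notMem_neighborFinset_self v), stepRow_self,
    sum_congr rfl fun w hw => stepRow_of_ne (G.ne_of_adj ((G.mem_neighborFinset v w).1 hw)).symm,
    sum_sub_distrib, sum_const, card_neighborFinset_eq_degree]
  by_cases huv : u = v
  · subst huv
    simp [lapMatrix, degMatrix, Finset.sum_apply, sub_eq_add_neg]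
  · simp [lapMatrix, degMatrix, Finset.sum_apply, one_apply, Pi.single_apply, huv, Ne.symm huv]

theorem det_one_sub_lapMatrix_eq_sum_det_stepMatrix {R : Type*} [CommRing R] :
    (1 - G.lapMatrix R).det = ∑ g ∈ G.parentMaps, (stepMatrix g : Matrix V V R).det := by
  have : 1 - G.lapMatrix R = of fun v => ∑ w ∈ insert v (G.neighborFinset v), stepRow v w :=
    funext G.one_sub_lapMatrix_row
  rw [this]
  exact detRowAlternating.toMultilinearMap.map_sum_finset _ _

open scoped Classical in
noncomputable def forestParentMaps : Finset (V → V) := {g ∈ G.parentMaps | ReachesFixedPt g}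

theorem det_one_sub_lapMatrix_eq_sum_forestParentMaps :
    (1 - G.lapMatrix ℤ).det = ∑ g ∈ G.forestParentMaps, (-1) ^ #{v | g v ≠ v} := by
  classical
  rw [det_one_sub_lapMatrix_eq_sum_det_stepMatrix, forestParentMaps, sum_filter]
  refine sum_congr rfl fun g _ => ?_
  split_ifs with hg
  · exact det_stepMatrix_of_reachesFixedPt hg
  · exact det_stepMatrix_of_not_reachesFixedPt hg

theorem card_rootedForest_eq_card_forestParentMaps (P : ℕ → Prop) [DecidablePred P] :
    Nat.card {f : RootedForest G // P (Nat.card f.H.edgeSet)} =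
      #{g ∈ G.forestParentMaps | P #{v | g v ≠ v}} := by
  classical
  calc Nat.card {f : RootedForest G // P (Nat.card f.H.edgeSet)}
      = Nat.card {g : {g : V → V // G.IsParentMap g ∧ ReachesFixedPt g} // P #{v | g.1 v ≠ v}} :=
        Nat.card_congr <| RootedForest.equivParentMap.subtypeEquiv fun f => by
          rw [f.natCard_edgeSet_eq_card_parent_ne]; rfl
    _ = Nat.card {g : V → V // (G.IsParentMap g ∧ ReachesFixedPt g) ∧ P #{v | g v ≠ v}} :=
        Nat.card_congr (Equiv.subtypeSubtypeEquivSubtypeInter _ fun g : V → V => P #{v | g v ≠ v})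
    _ = _ := Nat.subtype_card _ fun g => by simp [forestParentMaps, mem_parentMaps]

end SimpleGraph

theorem Finset.sum_neg_one_pow_eq_card_even_sub_card_odd {α : Type*} (s : Finset α) (m : α → ℕ) :
    ∑ a ∈ s, (-1 : ℤ) ^ m a = #{a ∈ s | Even (m a)} - #{a ∈ s | Odd (m a)} := by
  rw [← sum_filter_add_sum_filter_not s (fun a => Even (m a))]
  simp_rw [Nat.not_even_iff_odd]
  rw [sum_congr rfl fun a ha => Even.neg_one_pow (mem_filter.1 ha).2,
    sum_congr rfl fun a ha => Odd.neg_one_pow (mem_filter.1 ha).2]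
  simp [sub_eq_add_neg]

theorem det_one_sub_lapMatrix_eq_even_sub_odd_forests
    {n : ℕ} (G : SimpleGraph (Fin n)) [DecidableRel G.Adj] :
    (1 - G.lapMatrix ℤ).det =
      (Nat.card {f : RootedForest G // Even (Nat.card f.H.edgeSet)} : ℤ) -
      (Nat.card {f : RootedForest G // Odd (Nat.card f.H.edgeSet)} : ℤ) := by
  rw [G.det_one_sub_lapMatrix_eq_sum_forestParentMaps,
    G.card_rootedForest_eq_card_forestParentMaps, G.card_rootedForest_eq_card_forestParentMaps]
  exact sum_neg_one_pow_eq_card_even_sub_card_odd _ _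
end
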